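/- arXiv:2506.06409 — 4 statements merged into one kernel-verified Lean document; each statement's English description precedes it below -/
import Mathlib

section
/- Let m ≥ 2 and λ ∈ [1/2, 1). Consider the convex set P_λ = {p ∈ Δ_m : max_x p(x) ≤ λ}. The set of extreme points of P_λ is exactly the set P_{spike,λ} of probability vectors having one coordinate equal to λ, one coordinate equal to 1−λ, and all other coordinates equal to 0. -/
private lemma sum_split' {m : ℕ} (f : Fin m → ℝ) {x y : Fin m} (hxy : x ≠ y) :
    ∑ z, f z = f x + f y + ∑ z ∈ (Finset.univ.erase x).erase y, f z := by
  rw [← Finset.add_sum_erase _ f (Finset.mem_univ x),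
    ← Finset.add_sum_erase _ f (Finset.mem_erase.mpr ⟨hxy.symm, Finset.mem_univ y⟩)]
  ring

/-- for `λ ∈ [1/2, 1)`, the extreme points of
`P_λ = {p ∈ Δ_m : max_x p x ≤ λ}` are exactly the "spike" distributions, i.e. those
probability vectors with one coordinate equal to `λ`, one equal to `1 - λ`, and the rest `0`. -/
theorem extremePoints_of_capped_simplex (m : ℕ) (hm : 2 ≤ m) (lam : ℝ)
    (hlam : lam ∈ Set.Ico (1 / 2 : ℝ) 1) :
    Set.extremePoints ℝ {p ∈ stdSimplex ℝ (Fin m) | ∀ x, p x ≤ lam}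
      = {p ∈ stdSimplex ℝ (Fin m) |
          ∃ i j : Fin m, i ≠ j ∧ p i = lam ∧ p j = 1 - lam ∧
            ∀ x, x ≠ i → x ≠ j → p x = 0} := by
  obtain ⟨hhalf, hlt1⟩ := hlam
  ext p
  constructor
  · -- forward: extreme ⇒ spike
    rintro ⟨⟨⟨hpos, hsum⟩, hcap⟩, hext⟩
    -- Claim A: no two coordinates strictly between 0 and lam
    have claimA : ∀ x y : Fin m, x ≠ y → 0 < p x → p x < lam → 0 < p y → p y < lam →
        False := by
      intro x y hxy hx0 hxl hy0 hyl
      set ε : ℝ := min (min (lam - p x) (p y)) (min (p x) (lam - p y)) with hεdef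
      have hε1 : ε ≤ lam - p x := (min_le_left _ _).trans (min_le_left _ _)
      have hε2 : ε ≤ p y := (min_le_left _ _).trans (min_le_right _ _)
      have hε3 : ε ≤ p x := (min_le_right _ _).trans (min_le_left _ _)
      have hε4 : ε ≤ lam - p y := (min_le_right _ _).trans (min_le_right _ _)
      have hε : 0 < ε := lt_min (lt_min (by linarith) hy0) (lt_min hx0 (by linarith))
      set q : Fin m → ℝ :=
        Function.update (Function.update p x (p x + ε)) y (p y - ε) with hqdef
      set r : Fin m → ℝ :=
        Function.update (Function.update p x (p x - ε)) y (p y + ε) with hrdef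
      have hqx : q x = p x + ε := by simp [hqdef, Function.update_apply, hxy]
      have hqy : q y = p y - ε := by simp [hqdef, Function.update_apply]
      have hrx : r x = p x - ε := by simp [hrdef, Function.update_apply, hxy]
      have hry : r y = p y + ε := by simp [hrdef, Function.update_apply]
      have hqo : ∀ z, z ≠ x → z ≠ y → q z = p z := by
        intro z h1 h2; simp [hqdef, Function.update_apply, h1, h2]
      have hro : ∀ z, z ≠ x → z ≠ y → r z = p z := by
        intro z h1 h2; simp [hrdef, Function.update_apply, h1, h2]
      have hqS : q ∈ {p ∈ stdSimplex ℝ (Fin m) | ∀ x, p x ≤ lam} := by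
        refine ⟨⟨?_, ?_⟩, ?_⟩
        · intro z
          by_cases h1 : z = x
          · subst h1; rw [hqx]; linarith
          by_cases h2 : z = y
          · subst h2; rw [hqy]; linarith
          · rw [hqo z h1 h2]; exact hpos z
        · rw [sum_split' q hxy, hqx, hqy,
            Finset.sum_congr rfl (fun z hz => hqo z (Finset.ne_of_mem_erase
              (Finset.mem_of_mem_erase hz)) (Finset.ne_of_mem_erase hz))]
          have := sum_split' p hxy
          linarith [hsum]
        · intro z
          by_cases h1 : z = x
          · subst h1; rw [hqx]; linarith
          by_cases h2 : z = y
          · subst h2; rw [hqy]; linarith [hcap z]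
          · rw [hqo z h1 h2]; exact hcap z
      have hrS : r ∈ {p ∈ stdSimplex ℝ (Fin m) | ∀ x, p x ≤ lam} := by
        refine ⟨⟨?_, ?_⟩, ?_⟩
        · intro z
          by_cases h1 : z = x
          · subst h1; rw [hrx]; linarith
          by_cases h2 : z = y
          · subst h2; rw [hry]; linarith
          · rw [hro z h1 h2]; exact hpos z
        · rw [sum_split' r hxy, hrx, hry,
            Finset.sum_congr rfl (fun z hz => hro z (Finset.ne_of_mem_erase
              (Finset.mem_of_mem_erase hz)) (Finset.ne_of_mem_erase hz))]
          have := sum_split' p hxy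
          linarith [hsum]
        · intro z
          by_cases h1 : z = x
          · subst h1; rw [hrx]; linarith
          by_cases h2 : z = y
          · subst h2; rw [hry]; linarith
          · rw [hro z h1 h2]; exact hcap z
      have hseg : p ∈ openSegment ℝ q r := by
        refine ⟨1/2, 1/2, by norm_num, by norm_num, by norm_num, ?_⟩
        funext z
        simp only [Pi.add_apply, Pi.smul_apply, smul_eq_mul]
        by_cases h1 : z = x
        · subst h1; rw [hqx, hrx]; ring
        by_cases h2 : z = y
        · subst h2; rw [hqy, hry]; ring
        · rw [hqo z h1 h2, hro z h1 h2]; ring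
      have hq_eq := hext hqS hrS hseg
      have := congrFun hq_eq x
      rw [hqx] at this
      linarith [this]
    -- membership in stdSimplex for the conclusion
    refine ⟨⟨hpos, hsum⟩, ?_⟩
    by_cases hT : ∃ t, 0 < p t ∧ p t < lam
    · obtain ⟨t, ht0, htl⟩ := hT
      have hval : ∀ x, x ≠ t → p x = 0 ∨ p x = lam := by
        intro x hx
        rcases (hpos x).lt_or_eq with h0 | h0
        · rcases (hcap x).lt_or_eq with h1 | h1
          · exact absurd (claimA x t hx h0 h1 ht0 htl) (not_false)
          · exact Or.inr h1
        · exact Or.inl h0.symm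
      have hex_i : ∃ i, p i = lam := by
        by_contra h
        push_neg at h
        have hz : ∀ x, x ≠ t → p x = 0 := by
          intro x hx
          rcases hval x hx with h0 | h0
          · exact h0
          · exact absurd h0 (h x)
        have h2 := Finset.add_sum_erase Finset.univ p (Finset.mem_univ t)
        have h1 : ∑ z ∈ Finset.univ.erase t, p z = 0 :=
          Finset.sum_eq_zero (fun z hz' => hz z (Finset.ne_of_mem_erase hz'))
        rw [h1, hsum] at h2
        linarith
      obtain ⟨i, hi⟩ := hex_i
      have hit : i ≠ t := by
        intro h; subst h; linarith
      have hzeros : ∀ x, x ≠ i → x ≠ t → p x = 0 := by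
        intro x hxi hxt
        rcases hval x hxt with h0 | h0
        · exact h0
        · exfalso
          have hsplit := sum_split' p (Ne.symm hxi)
          have htmem : t ∈ (Finset.univ.erase i).erase x :=
            Finset.mem_erase.mpr ⟨Ne.symm hxt, Finset.mem_erase.mpr ⟨Ne.symm hit, Finset.mem_univ t⟩⟩
          have htail : p t ≤ ∑ z ∈ (Finset.univ.erase i).erase x, p z :=
            Finset.single_le_sum (fun z _ => hpos z) htmem
          rw [hsum, hi, h0] at hsplit
          linarith
      have hsplit := sum_split' p hit
      have htail : ∑ z ∈ (Finset.univ.erase i).erase t, p z = 0 :=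
        Finset.sum_eq_zero (fun z hz => hzeros z
          (Finset.ne_of_mem_erase (Finset.mem_of_mem_erase hz)) (Finset.ne_of_mem_erase hz))
      rw [hsum, hi, htail] at hsplit
      exact ⟨i, t, hit, hi, by linarith, hzeros⟩
    · push_neg at hT
      have hval : ∀ x, p x = 0 ∨ p x = lam := by
        intro x
        rcases (hpos x).lt_or_eq with h0 | h0
        · exact Or.inr (le_antisymm (hcap x) (hT x h0))
        · exact Or.inl h0.symm
      have hex_i : ∃ i, p i = lam := by
        by_contra h
        push_neg at h
        have : ∑ z, p z = 0 := Finset.sum_eq_zero (fun z _ => by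
          rcases hval z with h0 | h0
          · exact h0
          · exact absurd h0 (h z))
        rw [hsum] at this; linarith
      obtain ⟨i, hi⟩ := hex_i
      have hex_j : ∃ j, j ≠ i ∧ p j = lam := by
        by_contra h
        push_neg at h
        have h2 := Finset.add_sum_erase Finset.univ p (Finset.mem_univ i)
        have h1 : ∑ z ∈ Finset.univ.erase i, p z = 0 :=
          Finset.sum_eq_zero (fun z hz' => by
            rcases hval z with h0 | h0
            · exact h0
            · exact absurd h0 (h z (Finset.ne_of_mem_erase hz')))
        rw [h1, hsum, hi] at h2
        linarith
      obtain ⟨j, hji, hj⟩ := hex_j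
      have hij : i ≠ j := Ne.symm hji
      have hzeros : ∀ x, x ≠ i → x ≠ j → p x = 0 := by
        intro x hxi hxj
        rcases hval x with h0 | h0
        · exact h0
        · exfalso
          have hsplit := sum_split' p hij
          have hxmem : x ∈ (Finset.univ.erase i).erase j :=
            Finset.mem_erase.mpr ⟨hxj, Finset.mem_erase.mpr ⟨hxi, Finset.mem_univ x⟩⟩
          have htail : p x ≤ ∑ z ∈ (Finset.univ.erase i).erase j, p z :=
            Finset.single_le_sum (fun z _ => hpos z) hxmem
          rw [hsum, hi, hj] at hsplit
          linarith
      have hsplit := sum_split' p hij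
      have htail : ∑ z ∈ (Finset.univ.erase i).erase j, p z = 0 :=
        Finset.sum_eq_zero (fun z hz => hzeros z
          (Finset.ne_of_mem_erase (Finset.mem_of_mem_erase hz)) (Finset.ne_of_mem_erase hz))
      rw [hsum, hi, hj, htail] at hsplit
      have hhalf' : lam = 1/2 := by linarith
      exact ⟨i, j, hij, hi, by rw [hj, hhalf']; norm_num, hzeros⟩
  · -- backward: spike ⇒ extreme
    rintro ⟨⟨hpos, hsum⟩, i, j, hij, hpi, hpj, hz⟩
    have hcap : ∀ x, p x ≤ lam := by
      intro x
      by_cases hxi : x = i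
      · subst hxi; rw [hpi]
      by_cases hxj : x = j
      · subst hxj; rw [hpj]; linarith
      · rw [hz x hxi hxj]; linarith
    refine ⟨⟨⟨hpos, hsum⟩, hcap⟩, ?_⟩
    rintro a ⟨⟨hapos, hasum⟩, hacap⟩ b ⟨⟨hbpos, hbsum⟩, hbcap⟩ ⟨s, t, hs, ht, hst, heq⟩
    have hco : ∀ x, s * a x + t * b x = p x := by
      intro x
      have := congrFun heq x
      simpa using this
    have hzero : ∀ x, x ≠ i → x ≠ j → a x = 0 ∧ b x = 0 := by
      intro x h1 h2
      have h := hco x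
      rw [hz x h1 h2] at h
      have hsa : s * a x = 0 :=
        le_antisymm (by nlinarith [mul_nonneg ht.le (hbpos x)]) (mul_nonneg hs.le (hapos x))
      have htb : t * b x = 0 := by linarith
      constructor
      · rcases mul_eq_zero.1 hsa with h' | h'
        · exact absurd h' hs.ne'
        · exact h'
      · rcases mul_eq_zero.1 htb with h' | h'
        · exact absurd h' ht.ne'
        · exact h'
    have hati : a i = lam ∧ b i = lam := by
      have h := hco i
      rw [hpi] at h
      have e : s * lam + t * lam = lam := by rw [← add_mul, hst, one_mul]
      have h1 : s * (lam - a i) + t * (lam - b i) = 0 := by linear_combination e - h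
      have h2 : s * (lam - a i) = 0 :=
        le_antisymm (by nlinarith [mul_nonneg ht.le (sub_nonneg.2 (hbcap i))])
          (mul_nonneg hs.le (sub_nonneg.2 (hacap i)))
      have h3 : t * (lam - b i) = 0 := by linarith
      constructor
      · rcases mul_eq_zero.1 h2 with h' | h'
        · exact absurd h' hs.ne'
        · linarith
      · rcases mul_eq_zero.1 h3 with h' | h'
        · exact absurd h' ht.ne'
        · linarith
    have hatj : a j = 1 - lam ∧ b j = 1 - lam := by
      have hsplita := sum_split' a hij
      have hsplitb := sum_split' b hij
      have htaila : ∑ z ∈ (Finset.univ.erase i).erase j, a z = 0 :=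
        Finset.sum_eq_zero (fun z hz' => (hzero z
          (Finset.ne_of_mem_erase (Finset.mem_of_mem_erase hz'))
          (Finset.ne_of_mem_erase hz')).1)
      have htailb : ∑ z ∈ (Finset.univ.erase i).erase j, b z = 0 :=
        Finset.sum_eq_zero (fun z hz' => (hzero z
          (Finset.ne_of_mem_erase (Finset.mem_of_mem_erase hz'))
          (Finset.ne_of_mem_erase hz')).2)
      rw [hasum, hati.1, htaila] at hsplita
      rw [hbsum, hati.2, htailb] at hsplitb
      constructor <;> linarith
    refine (show a = p ∧ b = p from ?_).1
    constructor
    · funext x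
      by_cases h1 : x = i
      · subst h1; rw [hati.1, hpi]
      by_cases h2 : x = j
      · subst h2; rw [hatj.1, hpj]
      · rw [(hzero x h1 h2).1, hz x h1 h2]
    · funext x
      by_cases h1 : x = i
      · subst h1; rw [hati.2, hpi]
      by_cases h2 : x = j
      · subst h2; rw [hatj.2, hpj]
      · rw [(hzero x h1 h2).2, hz x h1 h2]
end

section
/- Fix integers m ≥ 2, k ≥ 1, λ ∈ [1/2, 1), and f : {1,…,m} × {1,…,k} → ℝ. Define Ψ(p) = max over all couplings P of (p, Uniform{1,…,k}) of Σ_{x,s} P(x,s)·f(x,s) − Σ_{x,s} p(x)·(1/k)·f(x,s). Then the minimum of Ψ over P_λ = {p ∈ Δ_m : max_x p(x) ≤ λ} is attained at some element of P_{spike,λ}, the set of probability vectors whose multiset of entries is {λ, 1−λ, 0, …, 0}. -/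
/-- A coupling of `p` with the uniform distribution on `{1,…,k}`. -/
def IsCoupling {m k : ℕ} (p : Fin m → ℝ) (P : Fin m → Fin k → ℝ) : Prop :=
  (∀ x s, 0 ≤ P x s) ∧ (∀ x, ∑ s, P x s = p x) ∧ (∀ s, ∑ x, P x s = 1 / (k : ℝ))

/-- `Ψ(p)`: the maximal detection gap over all couplings of `(p, Uniform{1,…,k})`. -/
noncomputable def Psi {m k : ℕ} (f : Fin m → Fin k → ℝ) (p : Fin m → ℝ) : ℝ :=
  sSup {v | ∃ P, IsCoupling p P ∧
    v = (∑ x, ∑ s, P x s * f x s) - (∑ x, ∑ s, p x * (1 / (k : ℝ)) * f x s)}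

open Finset

section AuxPsi

variable {m k : ℕ}

/-- The set of achievable detection gaps. -/
def PsiSet (f : Fin m → Fin k → ℝ) (p : Fin m → ℝ) : Set ℝ :=
  {v | ∃ P, IsCoupling p P ∧
    v = (∑ x, ∑ s, P x s * f x s) - (∑ x, ∑ s, p x * (1 / (k : ℝ)) * f x s)}

lemma Psi_eq (f : Fin m → Fin k → ℝ) (p : Fin m → ℝ) : Psi f p = sSup (PsiSet f p) := rfl

lemma psiSet_nonempty (hk1 : 1 ≤ k) (f : Fin m → Fin k → ℝ) {p : Fin m → ℝ}
    (hp : p ∈ stdSimplex ℝ (Fin m)) : (PsiSet f p).Nonempty := by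
  have hk0 : (k : ℝ) ≠ 0 := by
    have : (0:ℝ) < k := by exact_mod_cast Nat.lt_of_lt_of_le Nat.zero_lt_one hk1
    linarith
  refine ⟨_, fun x _ => p x / k, ⟨fun x s => div_nonneg (hp.1 x) (Nat.cast_nonneg k),
    fun x => ?_, fun s => ?_⟩, rfl⟩
  · rw [Finset.sum_const, Finset.card_univ, Fintype.card_fin, nsmul_eq_mul]
    field_simp
  · rw [← Finset.sum_div, hp.2]

lemma psiSet_bdd (hk1 : 1 ≤ k) (f : Fin m → Fin k → ℝ) {p : Fin m → ℝ}
    (hp : p ∈ stdSimplex ℝ (Fin m)) : BddAbove (PsiSet f p) := by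
  refine ⟨(∑ x, ∑ s, |f x s|) + (∑ x, ∑ s, |f x s|), ?_⟩
  rintro v ⟨P, ⟨hP0, hProw, hPcol⟩, rfl⟩
  have hp1 : ∀ x, p x ≤ 1 := fun x => by
    calc p x ≤ ∑ y, p y := Finset.single_le_sum (fun y _ => hp.1 y) (mem_univ x)
    _ = 1 := hp.2
  have hP1 : ∀ x s, P x s ≤ 1 := fun x s => by
    calc P x s ≤ ∑ s', P x s' := Finset.single_le_sum (fun s' _ => hP0 x s') (mem_univ s)
    _ = p x := hProw x
    _ ≤ 1 := hp1 x
  have hkpos : (0:ℝ) < k := by exact_mod_cast Nat.lt_of_lt_of_le Nat.zero_lt_one hk1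
  have hk0 : (0:ℝ) ≤ 1/(k:ℝ) := by positivity
  have hk1' : 1/(k:ℝ) ≤ 1 := by
    rw [div_le_one hkpos]; exact_mod_cast hk1
  have h1 : (∑ x, ∑ s, P x s * f x s) ≤ ∑ x, ∑ s, |f x s| := by
    refine Finset.sum_le_sum fun x _ => Finset.sum_le_sum fun s _ => ?_
    nlinarith [mul_le_mul_of_nonneg_left (le_abs_self (f x s)) (hP0 x s),
      mul_le_mul_of_nonneg_right (hP1 x s) (abs_nonneg (f x s))]
  have h2 : (∑ x, ∑ s, -|f x s|) ≤ ∑ x, ∑ s, p x * (1/(k:ℝ)) * f x s := by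
    refine Finset.sum_le_sum fun x _ => Finset.sum_le_sum fun s _ => ?_
    have ha0 : 0 ≤ p x * (1/(k:ℝ)) := mul_nonneg (hp.1 x) hk0
    have ha1 : p x * (1/(k:ℝ)) ≤ 1 := mul_le_one₀ (hp1 x) hk0 hk1'
    nlinarith [mul_le_mul_of_nonneg_left (neg_abs_le (f x s)) ha0,
      mul_le_mul_of_nonneg_right ha1 (abs_nonneg (f x s))]
  have h3 : (∑ x, ∑ s, -|f x s|) = -∑ x, ∑ s, |f x s| := by
    simp [Finset.sum_neg_distrib]
  rw [h3] at h2
  linarith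

/-- Concavity of `Psi` in the form we need: along a segment, `Psi` is at least the min of the
endpoint values. -/
lemma psi_mix (hk1 : 1 ≤ k) (f : Fin m → Fin k → ℝ) {A B q : Fin m → ℝ}
    (hA : A ∈ stdSimplex ℝ (Fin m)) (hB : B ∈ stdSimplex ℝ (Fin m))
    {s : ℝ} (hs0 : 0 ≤ s) (hs1 : s ≤ 1) (hq : ∀ x, q x = s * A x + (1 - s) * B x) :
    min (Psi f A) (Psi f B) ≤ Psi f q := by
  have hqs : q ∈ stdSimplex ℝ (Fin m) := by
    constructor
    · intro x
      rw [hq x]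
      have := hA.1 x; have := hB.1 x
      nlinarith
    · have : ∑ x, q x = s * (∑ x, A x) + (1 - s) * (∑ x, B x) := by
        simp only [hq, Finset.sum_add_distrib, Finset.mul_sum]
      rw [this, hA.2, hB.2]; ring
  refine le_of_forall_pos_le_add ?_
  intro ε hε
  obtain ⟨vA, hvA, hvAlt⟩ := exists_lt_of_lt_csSup (psiSet_nonempty hk1 f hA)
    (show Psi f A - ε < sSup (PsiSet f A) by rw [← Psi_eq]; linarith)
  obtain ⟨vB, hvB, hvBlt⟩ := exists_lt_of_lt_csSup (psiSet_nonempty hk1 f hB)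
    (show Psi f B - ε < sSup (PsiSet f B) by rw [← Psi_eq]; linarith)
  obtain ⟨PA, hPA, hvAeq⟩ := hvA
  obtain ⟨PB, hPB, hvBeq⟩ := hvB
  set P : Fin m → Fin k → ℝ := fun x s' => s * PA x s' + (1 - s) * PB x s' with hPdef
  have hP : IsCoupling q P := by
    refine ⟨fun x s' => ?_, fun x => ?_, fun s' => ?_⟩
    · have := hPA.1 x s'; have := hPB.1 x s'
      dsimp [P]; nlinarith
    · dsimp [P]
      rw [Finset.sum_add_distrib, ← Finset.mul_sum, ← Finset.mul_sum, hPA.2.1 x, hPB.2.1 x,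
        hq x]
    · dsimp [P]
      rw [Finset.sum_add_distrib, ← Finset.mul_sum, ← Finset.mul_sum, hPA.2.2 s', hPB.2.2 s']
      ring
  have hval : (∑ x, ∑ s', P x s' * f x s') - (∑ x, ∑ s', q x * (1 / (k : ℝ)) * f x s')
      = s * vA + (1 - s) * vB := by
    rw [hvAeq, hvBeq]
    have e1 : (∑ x, ∑ s', P x s' * f x s')
        = s * (∑ x, ∑ s', PA x s' * f x s') + (1 - s) * (∑ x, ∑ s', PB x s' * f x s') := by
      simp only [P, add_mul, Finset.sum_add_distrib, Finset.mul_sum, mul_assoc]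
    have e2 : (∑ x, ∑ s', q x * (1 / (k : ℝ)) * f x s')
        = s * (∑ x, ∑ s', A x * (1 / (k : ℝ)) * f x s')
          + (1 - s) * (∑ x, ∑ s', B x * (1 / (k : ℝ)) * f x s') := by
      simp only [hq, add_mul, Finset.sum_add_distrib, Finset.mul_sum, mul_assoc]
    rw [e1, e2]; ring
  have hle : s * vA + (1 - s) * vB ≤ Psi f q := by
    rw [← hval]
    exact le_csSup (psiSet_bdd hk1 f hqs) ⟨P, hP, rfl⟩
  have hminA := min_le_left (Psi f A) (Psi f B)
  have hminB := min_le_right (Psi f A) (Psi f B)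
  nlinarith

end AuxPsi

section AuxCombinatorics

variable {m k : ℕ}

/-- The set of "free" coordinates of `q`: those strictly between the bounds `0` and `lam`. -/
noncomputable def freeSet (lam : ℝ) (q : Fin m → ℝ) : Finset (Fin m) :=
  univ.filter (fun x => q x ≠ 0 ∧ q x ≠ lam)

/-- If at most one coordinate is free, then `q` is itself a spike. -/
lemma spike_of_card_le_one {lam : ℝ} (hlam : lam ∈ Set.Ico (1 / 2 : ℝ) 1)
    {q : Fin m → ℝ} (hq : q ∈ stdSimplex ℝ (Fin m)) (hle : ∀ x, q x ≤ lam)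
    (hcard : (freeSet lam q).card ≤ 1) :
    ∃ i j : Fin m, i ≠ j ∧ q i = lam ∧ q j = 1 - lam ∧ ∀ x, x ≠ i → x ≠ j → q x = 0 := by
  obtain ⟨hlam2, hlam1⟩ := hlam
  have hlam0 : (0:ℝ) ≤ lam := by linarith
  have hstep1 : ∃ i, q i = lam := by
    by_contra h
    push_neg at h
    have hzero : ∀ x ∈ univ \ freeSet lam q, q x = 0 := by
      intro x hx
      simp only [freeSet, mem_sdiff, mem_filter, mem_univ, true_and, not_and_or,
        not_not] at hx
      rcases hx with h0 | hl
      · exact h0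
      · exact absurd hl (h x)
    have hsum : (1:ℝ) = ∑ x ∈ freeSet lam q, q x := by
      rw [← hq.2]
      exact (Finset.sum_subset (Finset.subset_univ _) (fun x hx hx' => by
        exact hzero x (mem_sdiff.mpr ⟨hx, hx'⟩))).symm
    have hb : ∑ x ∈ freeSet lam q, q x ≤ (freeSet lam q).card * lam :=
      le_trans (Finset.sum_le_sum (fun x _ => hle x)) (by rw [Finset.sum_const, nsmul_eq_mul])
    have hcl : ((freeSet lam q).card : ℝ) * lam ≤ 1 * lam := by
      have : ((freeSet lam q).card : ℝ) ≤ 1 := by exact_mod_cast hcard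
      nlinarith
    linarith
  obtain ⟨i, hi⟩ := hstep1
  have hikey : ∑ x ∈ univ.erase i, q x = 1 - lam := by
    have := Finset.add_sum_erase univ q (mem_univ i)
    rw [hq.2] at this
    linarith [this]
  have hpos : (0:ℝ) < 1 - lam := by linarith
  have hj : ∃ j ∈ univ.erase i, q j ≠ 0 := by
    by_contra h
    push_neg at h
    rw [Finset.sum_eq_zero h] at hikey
    linarith
  obtain ⟨j, hjmem, hj0⟩ := hj
  have hji : j ≠ i := (Finset.mem_erase.mp hjmem).1
  have key : ∀ x ∈ univ.erase i, x ≠ j → q x = 0 := by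
    intro x hxmem hxj
    by_contra hx0
    have hpair : ({x, j} : Finset (Fin m)) ⊆ univ.erase i := by
      intro y hy
      rcases Finset.mem_insert.mp hy with rfl | hy
      · exact hxmem
      · rw [Finset.mem_singleton.mp hy]; exact hjmem
    have hsumpair : q x + q j ≤ ∑ y ∈ univ.erase i, q y := by
      have := Finset.sum_le_sum_of_subset_of_nonneg hpair
        (fun y _ _ => hq.1 y)
      rwa [Finset.sum_pair hxj] at this
    have hxpos : 0 < q x := lt_of_le_of_ne (hq.1 x) (Ne.symm hx0)
    have hjpos : 0 < q j := lt_of_le_of_ne (hq.1 j) (Ne.symm hj0)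
    have hnotboth : x ∉ freeSet lam q ∨ j ∉ freeSet lam q := by
      by_contra h
      push_neg at h
      have : 1 < (freeSet lam q).card :=
        Finset.one_lt_card.mpr ⟨x, h.1, j, h.2, hxj⟩
      omega
    rcases hnotboth with h | h
    · have hxl : q x = lam := by
        simp only [freeSet, mem_filter, mem_univ, true_and, not_and_or, not_not] at h
        rcases h with h | h
        · exact absurd h hx0
        · exact h
      rw [hxl, hikey] at hsumpair; linarith
    · have hjl : q j = lam := by
        simp only [freeSet, mem_filter, mem_univ, true_and, not_and_or, not_not] at h
        rcases h with h | h
        · exact absurd h hj0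
        · exact h
      rw [hjl, hikey] at hsumpair; linarith
  have hqj : q j = 1 - lam := by
    rw [← hikey]
    exact (Finset.sum_eq_single_of_mem j hjmem (fun b hb hbj => key b hb hbj)).symm
  exact ⟨i, j, hji.symm, hi, hqj, fun x hxi hxj =>
    key x (Finset.mem_erase.mpr ⟨hxi, mem_univ x⟩) hxj⟩

/-- One elementary move: shift `t` units of mass from coordinate `i` to coordinate `j`. -/
noncomputable def shift (q : Fin m → ℝ) (i j : Fin m) (t : ℝ) : Fin m → ℝ :=
  fun x => q x + t * ((if x = j then (1:ℝ) else 0) - (if x = i then (1:ℝ) else 0))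

lemma shift_apply_i {q : Fin m → ℝ} {i j : Fin m} (hij : i ≠ j) (t : ℝ) :
    shift q i j t i = q i - t := by simp [shift, hij]; ring

lemma shift_apply_j {q : Fin m → ℝ} {i j : Fin m} (hij : i ≠ j) (t : ℝ) :
    shift q i j t j = q j + t := by simp [shift, hij.symm]

lemma shift_apply_other {q : Fin m → ℝ} {i j x : Fin m} (hxi : x ≠ i) (hxj : x ≠ j) (t : ℝ) :
    shift q i j t x = q x := by simp [shift, hxi, hxj]

lemma shift_sum (q : Fin m → ℝ) (i j : Fin m) (t : ℝ) :
    ∑ x, shift q i j t x = ∑ x, q x := by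
  simp only [shift, Finset.sum_add_distrib, ← Finset.mul_sum, Finset.sum_sub_distrib]
  rw [Finset.sum_ite_eq' univ j (fun _ => (1:ℝ)), Finset.sum_ite_eq' univ i (fun _ => (1:ℝ))]
  simp

/-- The shifted vector stays in the polytope, and its free set does not grow. -/
lemma shift_props {lam : ℝ} (hlam : lam ∈ Set.Ico (1 / 2 : ℝ) 1)
    {q : Fin m → ℝ} (hq : q ∈ stdSimplex ℝ (Fin m)) (hle : ∀ x, q x ≤ lam)
    {i j : Fin m} (hij : i ≠ j) (hi : i ∈ freeSet lam q) (hj : j ∈ freeSet lam q)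
    {t : ℝ} (ht0 : 0 ≤ t) (hti : t ≤ q i) (htj : t ≤ lam - q j) :
    shift q i j t ∈ stdSimplex ℝ (Fin m) ∧ (∀ x, shift q i j t x ≤ lam) ∧
      freeSet lam (shift q i j t) ⊆ freeSet lam q := by
  simp only [freeSet, mem_filter, mem_univ, true_and] at hi hj
  have hi0 : 0 < q i := lt_of_le_of_ne (hq.1 i) (Ne.symm hi.1)
  have hil : q i < lam := lt_of_le_of_ne (hle i) hi.2
  have hj0 : 0 < q j := lt_of_le_of_ne (hq.1 j) (Ne.symm hj.1)
  have hjl : q j < lam := lt_of_le_of_ne (hle j) hj.2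
  refine ⟨⟨fun x => ?_, by rw [shift_sum, hq.2]⟩, fun x => ?_, fun x hx => ?_⟩
  · by_cases hxi : x = i
    · subst hxi; rw [shift_apply_i hij]; linarith
    · by_cases hxj : x = j
      · subst hxj; rw [shift_apply_j hij]; linarith [hq.1 x]
      · rw [shift_apply_other hxi hxj]; exact hq.1 x
  · by_cases hxi : x = i
    · subst hxi; rw [shift_apply_i hij]; linarith
    · by_cases hxj : x = j
      · subst hxj; rw [shift_apply_j hij]; linarith
      · rw [shift_apply_other hxi hxj]; exact hle x
  · simp only [freeSet, mem_filter, mem_univ, true_and] at hx ⊢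
    by_cases hxi : x = i
    · subst hxi; exact hi
    · by_cases hxj : x = j
      · subst hxj; exact hj
      · rwa [shift_apply_other hxi hxj] at hx

/-- Main induction: any point of the polytope dominates some spike in `Psi`. -/
lemma main_induction (hk1 : 1 ≤ k) {lam : ℝ} (hlam : lam ∈ Set.Ico (1 / 2 : ℝ) 1)
    (f : Fin m → Fin k → ℝ) :
    ∀ n (q : Fin m → ℝ), q ∈ stdSimplex ℝ (Fin m) → (∀ x, q x ≤ lam) →
      (freeSet lam q).card ≤ n →
    ∃ p ∈ stdSimplex ℝ (Fin m),
      (∃ i j : Fin m, i ≠ j ∧ p i = lam ∧ p j = 1 - lam ∧ ∀ x, x ≠ i → x ≠ j → p x = 0) ∧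
      Psi f p ≤ Psi f q := by
  intro n
  induction n with
  | zero =>
    intro q hq hle hcard
    exact ⟨q, hq, spike_of_card_le_one hlam hq hle (le_trans hcard (Nat.zero_le 1)), le_refl _⟩
  | succ n ih =>
    intro q hq hle hcard
    by_cases hc : (freeSet lam q).card ≤ 1
    · exact ⟨q, hq, spike_of_card_le_one hlam hq hle hc, le_refl _⟩
    · push_neg at hc
      obtain ⟨i, hi, j, hj, hij⟩ := Finset.one_lt_card.mp hc
      have hi' := hi; have hj' := hj
      simp only [freeSet, mem_filter, mem_univ, true_and] at hi' hj'
      have hi0 : 0 < q i := lt_of_le_of_ne (hq.1 i) (Ne.symm hi'.1)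
      have hil : q i < lam := lt_of_le_of_ne (hle i) hi'.2
      have hj0 : 0 < q j := lt_of_le_of_ne (hq.1 j) (Ne.symm hj'.1)
      have hjl : q j < lam := lt_of_le_of_ne (hle j) hj'.2
      set t1 : ℝ := min (q i) (lam - q j) with ht1def
      set t2 : ℝ := min (lam - q i) (q j) with ht2def
      have ht1 : 0 < t1 := lt_min hi0 (by linarith)
      have ht2 : 0 < t2 := lt_min (by linarith) hj0
      set A : Fin m → ℝ := shift q i j t1 with hAdef
      set B : Fin m → ℝ := shift q j i t2 with hBdef
      have hApr := shift_props hlam hq hle hij hi hj (le_of_lt ht1)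
        (min_le_left _ _) (min_le_right _ _)
      have hBpr := shift_props hlam hq hle hij.symm hj hi (le_of_lt ht2)
        (min_le_right _ _) (min_le_left _ _)
      have hAdrop : ∃ w ∈ freeSet lam q, w ∉ freeSet lam A := by
        rcases le_total (q i) (lam - q j) with h | h
        · refine ⟨i, hi, ?_⟩
          have : A i = 0 := by rw [hAdef, shift_apply_i hij, ht1def, min_eq_left h]; ring
          simp [freeSet, this]
        · refine ⟨j, hj, ?_⟩
          have : A j = lam := by rw [hAdef, shift_apply_j hij, ht1def, min_eq_right h]; ring
          simp [freeSet, this]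
      have hBdrop : ∃ w ∈ freeSet lam q, w ∉ freeSet lam B := by
        rcases le_total (lam - q i) (q j) with h | h
        · refine ⟨i, hi, ?_⟩
          have : B i = lam := by
            rw [hBdef, shift_apply_j hij.symm, ht2def, min_eq_left h]; ring
          simp [freeSet, this]
        · refine ⟨j, hj, ?_⟩
          have : B j = 0 := by
            rw [hBdef, shift_apply_i hij.symm, ht2def, min_eq_right h]; ring
          simp [freeSet, this]
      have cardlem : ∀ (C : Fin m → ℝ), freeSet lam C ⊆ freeSet lam q →
          (∃ w ∈ freeSet lam q, w ∉ freeSet lam C) → (freeSet lam C).card ≤ n := by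
        rintro C hsub ⟨w, hwq, hwC⟩
        have hsub' : freeSet lam C ⊆ (freeSet lam q).erase w := by
          intro x hx
          exact Finset.mem_erase.mpr ⟨fun hxw => hwC (hxw ▸ hx), hsub hx⟩
        have := Finset.card_le_card hsub'
        rw [Finset.card_erase_of_mem hwq] at this
        omega
      have hAcard := cardlem A hApr.2.2 hAdrop
      have hBcard := cardlem B hBpr.2.2 hBdrop
      have htsum : 0 < t1 + t2 := by linarith
      set s : ℝ := t2 / (t1 + t2) with hsdef
      have hs0 : 0 ≤ s := by positivity
      have hs1 : s ≤ 1 := by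
        rw [hsdef, div_le_one htsum]; linarith
      have hmixeq : ∀ x, q x = s * A x + (1 - s) * B x := by
        intro x
        have h1ms : 1 - s = t1 / (t1 + t2) := by
          rw [hsdef]; field_simp; ring
        rw [hAdef, hBdef]
        simp only [shift, h1ms, hsdef]
        field_simp
        ring
      have hmix := psi_mix hk1 f hApr.1 hBpr.1 hs0 hs1 hmixeq
      rcases le_total (Psi f A) (Psi f B) with hAB | hAB
      · obtain ⟨p, hp, hspike, hple⟩ := ih A hApr.1 hApr.2.1 hAcard
        refine ⟨p, hp, hspike, hple.trans ?_⟩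
        rw [min_eq_left hAB] at hmix
        exact hmix
      · obtain ⟨p, hp, hspike, hple⟩ := ih B hBpr.1 hBpr.2.1 hBcard
        refine ⟨p, hp, hspike, hple.trans ?_⟩
        rw [min_eq_right hAB] at hmix
        exact hmix

/-- The spike vector with mass `lam` at `i` and `1 - lam` at `j`. -/
noncomputable def spikeVec (lam : ℝ) (i j : Fin m) : Fin m → ℝ :=
  fun x => lam * (if x = i then 1 else 0) + (1 - lam) * (if x = j then 1 else 0)

lemma spikeVec_props {lam : ℝ} (hlam : lam ∈ Set.Ico (1 / 2 : ℝ) 1) {i j : Fin m}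
    (hij : i ≠ j) :
    spikeVec lam i j ∈ stdSimplex ℝ (Fin m) ∧ spikeVec lam i j i = lam ∧
      spikeVec lam i j j = 1 - lam ∧ (∀ x, x ≠ i → x ≠ j → spikeVec lam i j x = 0) := by
  obtain ⟨hlam2, hlam1⟩ := hlam
  refine ⟨⟨fun x => ?_, ?_⟩, by simp [spikeVec, hij], by simp [spikeVec, hij.symm],
    fun x hxi hxj => by simp [spikeVec, hxi, hxj]⟩
  · dsimp [spikeVec]
    by_cases hxi : x = i <;> by_cases hxj : x = j <;> simp [hxi, hxj, hij, hij.symm] <;> linarith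
  · simp only [spikeVec, Finset.sum_add_distrib, ← Finset.mul_sum,
      Finset.sum_ite_eq' univ i (fun _ => (1:ℝ)), Finset.sum_ite_eq' univ j (fun _ => (1:ℝ))]
    simp

lemma spike_eq_spikeVec {lam : ℝ} {p : Fin m → ℝ} {i j : Fin m} (hij : i ≠ j)
    (hpi : p i = lam) (hpj : p j = 1 - lam) (hp0 : ∀ x, x ≠ i → x ≠ j → p x = 0) :
    p = spikeVec lam i j := by
  funext x
  by_cases hxi : x = i
  · subst hxi; simp [spikeVec, hij, hpi]
  · by_cases hxj : x = j
    · subst hxj; simp [spikeVec, hij.symm, hpj]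
    · simp [spikeVec, hxi, hxj, hp0 x hxi hxj]

end AuxCombinatorics

/-- the minimum of `Ψ` over `P_λ = {p ∈ Δ_m : max_x p x ≤ λ}` is attained at
some spike distribution (one coordinate `λ`, one coordinate `1 - λ`, the rest `0`). -/
theorem psi_min_attained_at_spike (m k : ℕ) (hm : 2 ≤ m) (hk : 1 ≤ k) (lam : ℝ)
    (hlam : lam ∈ Set.Ico (1 / 2 : ℝ) 1) (f : Fin m → Fin k → ℝ) :
    ∃ p ∈ stdSimplex ℝ (Fin m),
      (∃ i j : Fin m, i ≠ j ∧ p i = lam ∧ p j = 1 - lam ∧ ∀ x, x ≠ i → x ≠ j → p x = 0) ∧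
      ∀ q ∈ stdSimplex ℝ (Fin m), (∀ x, q x ≤ lam) → Psi f p ≤ Psi f q := by
  classical
  set S : Finset (Fin m × Fin m) := Finset.univ.filter (fun ij => ij.1 ≠ ij.2) with hSdef
  have hSne : S.Nonempty := by
    refine ⟨(⟨0, by omega⟩, ⟨1, by omega⟩), ?_⟩
    simp only [hSdef, Finset.mem_filter, Finset.mem_univ, true_and]
    intro h
    simp [Fin.ext_iff] at h
  obtain ⟨⟨i0, j0⟩, hmem, hminall⟩ :=
    Finset.exists_min_image S (fun ij => Psi f (spikeVec lam ij.1 ij.2)) hSne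
  have hi0j0 : i0 ≠ j0 := by
    simpa [hSdef] using hmem
  obtain ⟨hsimp, hpi, hpj, hp0⟩ := spikeVec_props hlam hi0j0
  refine ⟨spikeVec lam i0 j0, hsimp, ⟨i0, j0, hi0j0, hpi, hpj, hp0⟩, ?_⟩
  intro q hq hqle
  obtain ⟨p, hp, ⟨i, j, hij, hqi, hqj, hq0⟩, hple⟩ :=
    main_induction hk hlam f (freeSet lam q).card q hq hqle (le_refl _)
  have hpeq : p = spikeVec lam i j := spike_eq_spikeVec hij hqi hqj hq0
  have hijS : (i, j) ∈ S := by simp [hSdef, hij]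
  calc Psi f (spikeVec lam i0 j0) ≤ Psi f (spikeVec lam i j) := hminall (i, j) hijS
    _ = Psi f p := by rw [hpeq]
    _ ≤ Psi f q := hple
end

section
/- Let m ≥ 2, p ∈ Δ_m with p_i > 0 for every i, and let Z = (Z_1,…,Z_m) be a random vector with i.i.d. coordinates drawn from a distribution with a continuous cumulative distribution function and finite mean. Suppose α* ∈ ℝ^m minimizes the convex function φ(α) = Σ_{i=1}^m p_i α_i + E[ max_j ( Z_j − α_j ) ]. Then the argmax in max_j ( Z_j − α*_j ) is almost surely unique and, for every i ∈ {1,…,m}, P( argmax_j ( Z_j − α*_j ) = i ) = p_i. -/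
open MeasureTheory ProbabilityTheory Filter

section Aux
variable {Ω : Type} [MeasureSpace Ω] [IsProbabilityMeasure (ℙ : Measure Ω)]

lemma aux_sup_split {m : ℕ} (i : Fin m) (g : Fin m → ℝ) [Nonempty {j : Fin m // j ≠ i}] :
    (⨆ j, g j) = max (g i) (⨆ j : {j : Fin m // j ≠ i}, g j.1) := by
  haveI : Nonempty (Fin m) := ⟨i⟩
  have hbdd : BddAbove (Set.range fun j : {j : Fin m // j ≠ i} => g j.1) :=
    Set.Finite.bddAbove (Set.finite_range _)
  apply le_antisymm
  · refine ciSup_le fun j => ?_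
    by_cases hj : j = i
    · subst hj; exact le_max_left _ _
    · exact le_trans (le_ciSup hbdd ⟨j, hj⟩) (le_max_right _ _)
  · refine max_le (le_ciSup (Set.Finite.bddAbove (Set.finite_range g)) i)
      (ciSup_le fun j => le_ciSup (Set.Finite.bddAbove (Set.finite_range g)) j.1)

lemma aux_atomless (X : Ω → ℝ) (hX : Measurable X)
    (hcdf : Continuous fun x : ℝ => (ℙ {ω | X ω ≤ x}).toReal) (x : ℝ) :
    ℙ {ω | X ω = x} = 0 := by
  have key : ∀ y < x, (ℙ {ω | X ω = x}).toReal ≤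
      (ℙ {ω | X ω ≤ x}).toReal - (ℙ {ω | X ω ≤ y}).toReal := by
    intro y hy
    have hsub : {ω | X ω = x} ⊆ {ω | X ω ≤ x} \ {ω | X ω ≤ y} := by
      intro ω hω
      simp only [Set.mem_setOf_eq] at hω
      constructor
      · simp [Set.mem_setOf_eq, hω]
      · simp only [Set.mem_setOf_eq]; intro h; rw [hω] at h; linarith
    have h1 : ℙ ({ω | X ω ≤ x} \ {ω | X ω ≤ y}) =
        ℙ {ω | X ω ≤ x} - ℙ {ω | X ω ≤ y} := by
      apply measure_diff
      · intro ω hω; simp only [Set.mem_setOf_eq] at *; linarith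
      · exact (hX measurableSet_Iic).nullMeasurableSet
      · exact measure_ne_top _ _
    calc (ℙ {ω | X ω = x}).toReal ≤ (ℙ ({ω | X ω ≤ x} \ {ω | X ω ≤ y})).toReal := by
          apply ENNReal.toReal_mono (measure_ne_top _ _) (measure_mono hsub)
      _ = (ℙ {ω | X ω ≤ x}).toReal - (ℙ {ω | X ω ≤ y}).toReal := by
          rw [h1, ENNReal.toReal_sub_of_le (measure_mono (by
            intro ω hω; simp only [Set.mem_setOf_eq] at *; linarith)) (measure_ne_top _ _)]
  have hlim : Tendsto (fun y => (ℙ {ω | X ω ≤ x}).toReal - (ℙ {ω | X ω ≤ y}).toReal)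
      (nhdsWithin x (Set.Iio x)) (nhds 0) := by
    have h0 : Tendsto (fun y : ℝ => (ℙ {ω | X ω ≤ y}).toReal)
        (nhdsWithin x (Set.Iio x)) (nhds ((ℙ {ω | X ω ≤ x}).toReal)) :=
      ((hcdf.tendsto x).mono_left (nhdsWithin_le_nhds (s := Set.Iio x)))
    have h2 := (tendsto_const_nhds (x := (ℙ {ω | X ω ≤ x}).toReal)
      (f := nhdsWithin x (Set.Iio x))).sub h0
    simpa using h2
  have hle : (ℙ {ω | X ω = x}).toReal ≤ 0 := by
    refine ge_of_tendsto hlim ?_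
    filter_upwards [self_mem_nhdsWithin] with y hy using key y hy
  have : (ℙ {ω | X ω = x}).toReal = 0 := le_antisymm hle ENNReal.toReal_nonneg
  exact ((ENNReal.toReal_eq_zero_iff _).mp this).resolve_right (measure_ne_top _ _)

lemma aux_diff_atomless (X Y : Ω → ℝ) (hX : Measurable X) (hY : Measurable Y)
    (hXY : IndepFun X Y ℙ) (hatom : ∀ x, ℙ {ω | Y ω = x} = 0) (c : ℝ) :
    ℙ {ω | X ω - Y ω = c} = 0 := by
  have hmap : (ℙ : Measure Ω).map (fun ω => (X ω, Y ω)) =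
      ((ℙ : Measure Ω).map X).prod ((ℙ : Measure Ω).map Y) :=
    (indepFun_iff_map_prod_eq_prod_map_map hX.aemeasurable hY.aemeasurable).mp hXY
  have hs : MeasurableSet {p : ℝ × ℝ | p.1 - p.2 = c} :=
    (measurable_fst.sub measurable_snd) (measurableSet_singleton c)
  have h1 : ℙ {ω | X ω - Y ω = c} =
      ((ℙ : Measure Ω).map (fun ω => (X ω, Y ω))) {p : ℝ × ℝ | p.1 - p.2 = c} := by
    rw [Measure.map_apply (hX.prodMk hY) hs]; rfl
  rw [h1, hmap, Measure.prod_apply hs]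
  have h2 : ∀ x : ℝ, ((ℙ : Measure Ω).map Y) (Prod.mk x ⁻¹' {p : ℝ × ℝ | p.1 - p.2 = c}) = 0 := by
    intro x
    have : Prod.mk x ⁻¹' {p : ℝ × ℝ | p.1 - p.2 = c} = {x - c} := by
      ext y; simp [Set.mem_setOf_eq, sub_eq_iff_eq_add]; constructor <;> intro h <;> linarith
    rw [this, Measure.map_apply hY (measurableSet_singleton _)]
    exact hatom (x - c)
  simp only [h2, MeasureTheory.lintegral_zero]

end Aux

/-- if `α*` minimizes the dual objective
`φ(α) = Σ_i p_i α_i + E[max_j (Z_j - α_j)]`, where the coordinates of `Z` are i.i.d. with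
continuous CDF and finite mean, then the argmax of `j ↦ Z_j - α*_j` is a.s. unique and
`P(argmax_j (Z_j - α*_j) = i) = p_i` for every `i`. -/
theorem dual_optimality_condition (m : ℕ) (hm : 2 ≤ m) (p : Fin m → ℝ)
    (hp : p ∈ stdSimplex ℝ (Fin m)) (hppos : ∀ i, 0 < p i)
    (Ω : Type) [MeasureSpace Ω] [IsProbabilityMeasure (ℙ : Measure Ω)]
    (Z : Ω → Fin m → ℝ) (hmeas : ∀ i, Measurable fun ω => Z ω i)
    (hindep : iIndepFun (fun i ω => Z ω i) ℙ)
    (hident : ∀ i, IdentDistrib (fun ω => Z ω i) (fun ω => Z ω ⟨0, by omega⟩) ℙ ℙ)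
    (hcdf : Continuous fun x : ℝ => (ℙ {ω | Z ω ⟨0, by omega⟩ ≤ x}).toReal)
    (hint : Integrable (fun ω => Z ω ⟨0, by omega⟩) ℙ)
    (φ : (Fin m → ℝ) → ℝ)
    (hφ : φ = fun α => ∑ i, p i * α i + ∫ ω, (⨆ j, (Z ω j - α j)) ∂ℙ)
    (αstar : Fin m → ℝ) (hmin : ∀ α, φ αstar ≤ φ α) :
    (∀ᵐ ω ∂ℙ, ∃! i : Fin m, ∀ j, Z ω j - αstar j ≤ Z ω i - αstar i)
    ∧ ∀ i : Fin m,
        (ℙ {ω | ∀ j, Z ω j - αstar j ≤ Z ω i - αstar i}).toReal = p i := by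
  haveI : NeZero m := ⟨by omega⟩
  set i0 : Fin m := ⟨0, by omega⟩ with hi0
  -- Step A : each coordinate has atomless law
  have hatom : ∀ (i : Fin m) (x : ℝ), ℙ {ω | Z ω i = x} = 0 := by
    intro i x
    have h0 : ℙ {ω | Z ω i0 = x} = 0 := aux_atomless (fun ω => Z ω i0) (hmeas i0) hcdf x
    have hmapeq := (hident i).map_eq
    have h1 : ℙ {ω | Z ω i = x} = ((ℙ : Measure Ω).map fun ω => Z ω i) {x} := by
      rw [Measure.map_apply (hmeas i) (measurableSet_singleton _)]; rfl
    have h2 : ℙ {ω | Z ω i0 = x} = ((ℙ : Measure Ω).map fun ω => Z ω i0) {x} := by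
      rw [Measure.map_apply (hmeas i0) (measurableSet_singleton _)]; rfl
    rw [h1, hmapeq, ← h2, h0]
  -- Step B : no ties almost surely
  have noties : ∀ᵐ ω ∂ℙ, ∀ i j : Fin m, i ≠ j → Z ω i - αstar i ≠ Z ω j - αstar j := by
    rw [ae_all_iff]
    intro i
    rw [ae_all_iff]
    intro j
    by_cases hij : i = j
    · filter_upwards with ω h; exact absurd hij h
    · have h0 : ℙ {ω | Z ω i - Z ω j = αstar i - αstar j} = 0 :=
        aux_diff_atomless (fun ω => Z ω i) (fun ω => Z ω j) (hmeas i) (hmeas j)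
          (hindep.indepFun hij) (fun x => hatom j x) _
      have : {ω | ¬ (i ≠ j → Z ω i - αstar i ≠ Z ω j - αstar j)} ⊆
          {ω | Z ω i - Z ω j = αstar i - αstar j} := by
        intro ω hω
        simp only [Set.mem_setOf_eq, _root_.not_imp, not_not] at hω
        obtain ⟨-, h2⟩ := hω
        simp only [Set.mem_setOf_eq]; linarith
      exact measure_mono_null this h0
  -- integrability of the supremum
  have hZint : ∀ j : Fin m, Integrable (fun ω => Z ω j) ℙ := fun j =>
    ((hident j).integrable_iff).mpr hint
  have hsup_meas : ∀ α : Fin m → ℝ, Measurable fun ω => ⨆ j, (Z ω j - α j) := fun α =>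
    Measurable.iSup fun j => (hmeas j).sub measurable_const
  have hsup_int : ∀ α : Fin m → ℝ, Integrable (fun ω => ⨆ j, (Z ω j - α j)) ℙ := by
    intro α
    have hbound : Integrable (fun ω => ∑ j, |Z ω j - α j|) ℙ :=
      integrable_finset_sum _ fun j _ => ((hZint j).sub (integrable_const _)).abs
    refine hbound.mono ((hsup_meas α).aestronglyMeasurable) ?_
    filter_upwards with ω
    simp only [Real.norm_eq_abs]
    refine le_trans ?_ (le_abs_self _)
    rw [abs_le]
    constructor
    · calc -(∑ j, |Z ω j - α j|) ≤ -|Z ω i0 - α i0| :=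
            neg_le_neg (Finset.single_le_sum (f := fun k => |Z ω k - α k|) (fun j _ => abs_nonneg _) (Finset.mem_univ i0))
        _ ≤ Z ω i0 - α i0 := neg_abs_le _
        _ ≤ ⨆ j, (Z ω j - α j) := le_ciSup (f := fun j => Z ω j - α j) (Set.Finite.bddAbove (Set.finite_range _)) i0
    · exact ciSup_le fun j => le_trans (le_abs_self _)
        (Finset.single_le_sum (f := fun k => |Z ω k - α k|) (fun k _ => abs_nonneg _)
          (Finset.mem_univ j))
  -- Step D : strict argmax probabilities via differentiation under the integral
  have hstrict : ∀ i : Fin m,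
      (ℙ {ω | (⨆ j : {j : Fin m // j ≠ i}, (Z ω j.1 - αstar j.1)) < Z ω i - αstar i}).toReal
        = p i := by
    intro i
    haveI hne : Nonempty {j : Fin m // j ≠ i} := by
      obtain ⟨k, hk⟩ := Fintype.exists_ne_of_one_lt_card (by simp; omega) i
      exact ⟨⟨k, hk⟩⟩
    set c : Ω → ℝ := fun ω => ⨆ j : {j : Fin m // j ≠ i}, (Z ω j.1 - αstar j.1) with hc
    have hc_meas : Measurable c := Measurable.iSup fun j => (hmeas j.1).sub measurable_const
    set A : Set Ω := {ω | c ω < Z ω i - αstar i} with hA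
    have hA_meas : MeasurableSet A := measurableSet_lt hc_meas ((hmeas i).sub measurable_const)
    set F : ℝ → Ω → ℝ := fun t ω => ⨆ j, (Z ω j - Function.update αstar i t j) with hF
    have hFsplit : ∀ t ω, F t ω = max (Z ω i - t) (c ω) := by
      intro t ω
      rw [hF]
      simp only
      rw [aux_sup_split i (fun j => Z ω j - Function.update αstar i t j)]
      have h1 : Z ω i - Function.update αstar i t i = Z ω i - t := by
        rw [Function.update_self]
      have h2 : (fun j : {j : Fin m // j ≠ i} => Z ω j.1 - Function.update αstar i t j.1)
          = fun j : {j : Fin m // j ≠ i} => Z ω j.1 - αstar j.1 :=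
        funext fun j => by rw [Function.update_of_ne j.2]
      rw [h1, hc]
      congr 1
      rw [h2]
    set F' : Ω → ℝ := A.indicator (fun _ => (-1 : ℝ)) with hF'
    have h_diff : ∀ᵐ ω ∂ℙ, HasDerivAt (fun t => F t ω) (F' ω) (αstar i) := by
      filter_upwards [noties] with ω hω
      obtain ⟨j0, hj0⟩ := Finite.exists_max fun j : {j : Fin m // j ≠ i} => Z ω j.1 - αstar j.1
      have hceq : c ω = Z ω j0.1 - αstar j0.1 :=
        le_antisymm (ciSup_le hj0)
          (le_ciSup (f := fun j : {j : Fin m // j ≠ i} => Z ω j.1 - αstar j.1)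
            (Set.Finite.bddAbove (Set.finite_range _)) j0)
      have hne2 : Z ω i - αstar i ≠ c ω := by
        rw [hceq]; exact hω i j0.1 (Ne.symm j0.2)
      rcases lt_or_gt_of_ne hne2 with hlt | hgt
      · have hF'0 : F' ω = 0 :=
          Set.indicator_of_notMem (by simp only [hA, Set.mem_setOf_eq]; push_neg; linarith) _
        rw [hF'0]
        have hev : (fun t => F t ω) =ᶠ[nhds (αstar i)] fun _ => c ω := by
          have hball := Metric.ball_mem_nhds (αstar i)
            (show (0:ℝ) < c ω - (Z ω i - αstar i) by linarith)
          filter_upwards [hball] with t ht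
          rw [hFsplit]
          rw [Metric.mem_ball, Real.dist_eq] at ht
          have h3 := abs_lt.mp ht
          exact max_eq_right (by linarith)
        exact (hasDerivAt_const (αstar i) (c ω)).congr_of_eventuallyEq hev
      · have hF'1 : F' ω = -1 :=
          Set.indicator_of_mem (by simp only [hA, Set.mem_setOf_eq]; linarith) _
        rw [hF'1]
        have hd : HasDerivAt (fun t : ℝ => Z ω i - t) (-1) (αstar i) := by
          simpa using (hasDerivAt_id (αstar i)).const_sub (Z ω i)
        refine hd.congr_of_eventuallyEq ?_
        have hball := Metric.ball_mem_nhds (αstar i)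
          (show (0:ℝ) < (Z ω i - αstar i) - c ω by linarith)
        filter_upwards [hball] with t ht
        rw [hFsplit]
        rw [Metric.mem_ball, Real.dist_eq] at ht
        have h3 := abs_lt.mp ht
        exact max_eq_left (by linarith)
    have h_lip : ∀ᵐ ω ∂ℙ, LipschitzOnWith (Real.nnabs ((fun _ : Ω => (1:ℝ)) ω))
        (fun t => F t ω) (Metric.ball (αstar i) 1) := by
      filter_upwards with ω
      have hlw : LipschitzWith 1 (fun t => F t ω) := by
        apply LipschitzWith.of_dist_le_mul
        intro s t
        rw [Real.dist_eq, Real.dist_eq, hFsplit, hFsplit]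
        calc |max (Z ω i - s) (c ω) - max (Z ω i - t) (c ω)|
            ≤ |(Z ω i - s) - (Z ω i - t)| := abs_max_sub_max_le_abs _ _ _
          _ = |s - t| := by rw [abs_sub_comm]; ring_nf
          _ ≤ 1 * |s - t| := by rw [one_mul]
      have h1 : Real.nnabs ((fun _ : Ω => (1:ℝ)) ω) = 1 := by simp
      rw [h1]
      exact hlw.lipschitzOnWith
    have hF_int : Integrable (F (αstar i)) ℙ := hsup_int (Function.update αstar i (αstar i))
    have hF_meas' : ∀ᶠ t in nhds (αstar i), AEStronglyMeasurable (F t) ℙ :=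
      Filter.Eventually.of_forall fun t =>
        (hsup_meas (Function.update αstar i t)).aestronglyMeasurable
    have hF'_meas : AEStronglyMeasurable F' ℙ :=
      (measurable_const.indicator hA_meas).aestronglyMeasurable
    obtain ⟨hF'_int, hderiv⟩ := hasDerivAt_integral_of_dominated_loc_of_lip
      (bound := fun _ : Ω => (1:ℝ)) (Metric.ball_mem_nhds _ one_pos) hF_meas' hF_int hF'_meas h_lip
      (integrable_const 1) h_diff
    have hsum : HasDerivAt (fun t => ∑ j, p j * Function.update αstar i t j) (p i) (αstar i) := by
      have h1 : HasDerivAt (fun t => ∑ j, p j * Function.update αstar i t j)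
          (∑ j, if j = i then p i else 0) (αstar i) := by
        apply HasDerivAt.fun_sum
        intro j _
        by_cases hj : j = i
        · subst hj
          have he : (fun t => p j * Function.update αstar j t j) = fun t => p j * t :=
            funext fun t => by rw [Function.update_self]
          rw [he, if_pos rfl]
          simpa using (hasDerivAt_id (αstar j)).const_mul (p j)
        · have he : (fun t => p j * Function.update αstar i t j) = fun _ => p j * αstar j :=
            funext fun t => by rw [Function.update_of_ne hj]
          rw [he, if_neg hj]
          exact hasDerivAt_const _ _
      simpa using h1
    have hψ : HasDerivAt (fun t => φ (Function.update αstar i t))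
        (p i + ∫ ω, F' ω ∂ℙ) (αstar i) := by
      have hcomb := hsum.add hderiv
      refine hcomb.congr_of_eventuallyEq ?_
      filter_upwards with t
      rw [hφ]; rfl
    have hlocmin : IsLocalMin (fun t => φ (Function.update αstar i t)) (αstar i) := by
      refine Filter.Eventually.of_forall fun t => ?_
      have h1 : Function.update αstar i (αstar i) = αstar := Function.update_eq_self i αstar
      simp only [h1]
      exact hmin _
    have hz : p i + ∫ ω, F' ω ∂ℙ = 0 := hlocmin.hasDerivAt_eq_zero hψ
    have hintF' : ∫ ω, F' ω ∂ℙ = -(ℙ A).toReal := by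
      rw [hF', integral_indicator_const (-1 : ℝ) hA_meas]
      simp [smul_eq_mul, mul_comm, measureReal_def]
    rw [hintF'] at hz
    have : (ℙ A).toReal = p i := by linarith
    exact this
  refine ⟨?_, ?_⟩
  · filter_upwards [noties] with ω hω
    obtain ⟨i, hi⟩ := Finite.exists_max fun j => Z ω j - αstar j
    refine ⟨i, hi, ?_⟩
    intro j hj
    by_contra hne
    exact hω j i hne (le_antisymm (hi j) (hj i))
  · intro i
    haveI hne : Nonempty {j : Fin m // j ≠ i} := by
      obtain ⟨k, hk⟩ := Fintype.exists_ne_of_one_lt_card (by simp; omega) i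
      exact ⟨⟨k, hk⟩⟩
    have hT : ℙ {ω | ∃ k l : Fin m, k ≠ l ∧ Z ω k - αstar k = Z ω l - αstar l} = 0 := by
      have h0 := noties
      rw [ae_iff] at h0
      refine measure_mono_null ?_ h0
      intro ω hω
      simp only [Set.mem_setOf_eq] at hω ⊢
      push_neg
      obtain ⟨k, l, hkl, he⟩ := hω
      exact ⟨k, l, hkl, he⟩
    set A : Set Ω :=
      {ω | (⨆ j : {j : Fin m // j ≠ i}, (Z ω j.1 - αstar j.1)) < Z ω i - αstar i} with hA
    set B : Set Ω := {ω | ∀ j, Z ω j - αstar j ≤ Z ω i - αstar i} with hB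
    have hAB : A ⊆ B := by
      intro ω hω j
      by_cases hj : j = i
      · subst hj; exact le_refl _
      · exact le_trans
          (le_ciSup (f := fun j : {j : Fin m // j ≠ i} => Z ω j.1 - αstar j.1)
            (Set.Finite.bddAbove (Set.finite_range _)) ⟨j, hj⟩)
          (le_of_lt hω)
    have hBA : B \ A ⊆ {ω | ∃ k l : Fin m, k ≠ l ∧ Z ω k - αstar k = Z ω l - αstar l} := by
      rintro ω ⟨hBω, hnA⟩
      simp only [hA, Set.mem_setOf_eq, not_lt] at hnA
      obtain ⟨j0, hj0⟩ := Finite.exists_max fun j : {j : Fin m // j ≠ i} => Z ω j.1 - αstar j.1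
      have hceq : (⨆ j : {j : Fin m // j ≠ i}, (Z ω j.1 - αstar j.1)) = Z ω j0.1 - αstar j0.1 :=
        le_antisymm (ciSup_le hj0)
          (le_ciSup (f := fun j : {j : Fin m // j ≠ i} => Z ω j.1 - αstar j.1)
            (Set.Finite.bddAbove (Set.finite_range _)) j0)
      have hle : (⨆ j : {j : Fin m // j ≠ i}, (Z ω j.1 - αstar j.1)) ≤ Z ω i - αstar i :=
        ciSup_le fun j => hBω j.1
      refine ⟨j0.1, i, j0.2, ?_⟩
      rw [← hceq]
      exact le_antisymm hle hnA
    have h1 : ℙ B ≤ ℙ A := by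
      have hsplit : B ⊆ A ∪ (B \ A) := by
        intro ω hω
        by_cases h : ω ∈ A
        · exact Or.inl h
        · exact Or.inr ⟨hω, h⟩
      calc ℙ B ≤ ℙ (A ∪ (B \ A)) := measure_mono hsplit
        _ ≤ ℙ A + ℙ (B \ A) := measure_union_le _ _
        _ ≤ ℙ A + 0 := add_le_add le_rfl (le_trans (measure_mono hBA) hT.le)
        _ = ℙ A := add_zero _
    have h2 : ℙ A ≤ ℙ B := measure_mono hAB
    have hBAeq : ℙ B = ℙ A := le_antisymm h1 h2
    show (ℙ B).toReal = p i
    rw [hBAeq]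
    exact hstrict i
end

section
/- Let λ ∈ [1/2, 1) and k ≥ 1, and set r = ⌊λk⌋ (so r < k). Let f(1,·), f(2,·) : {1,…,k} → ℝ be score values, and suppose the indices are ordered so that Δ_s := f(1,s) − f(2,s) is non-increasing in s. Let p = (λ, 1−λ) be the two-point distribution on X ∈ {1,2}. Then the maximum over all couplings P of (p, Uniform{1,…,k}) of Σ_{x,s} P(x,s)·f(x,s) equals (1/k)·Σ_{s=1}^k f(2,s) + (λ − r/k)·Δ_{r+1} + (1/k)·Σ_{s=1}^r Δ_s, and it is attained by the coupling P(1,s) = 1/k for s ≤ r, P(1,r+1) = λ − r/k, P(2,r+1) = (r+1)/k − λ, P(2,s) = 1/k for s ≥ r+2, with all other entries zero. -/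
private lemma card_filter_lt' {k : ℕ} (r : ℕ) (hrk : r < k) :
    (Finset.univ.filter (fun s : Fin k => s.val < r)).card = r := by
  have h : (Finset.univ.filter (fun s : Fin k => s.val < r)) = Finset.Iio ⟨r, hrk⟩ := by
    ext s; simp [Fin.lt_def]
  rw [h, Fin.card_Iio]

private lemma card_filter_gt' {k : ℕ} (r : ℕ) (hrk : r < k) :
    (Finset.univ.filter (fun s : Fin k => r < s.val)).card = k - (r + 1) := by
  have h : (Finset.univ.filter (fun s : Fin k => r < s.val)) = Finset.Ioi ⟨r, hrk⟩ := by
    ext s; simp [Fin.lt_def]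
  rw [h, Fin.card_Ioi]
  simp only [Fin.val_mk]
  omega

private lemma sum_split'_s15 {k : ℕ} (r : ℕ) (hrk : r < k) (g : Fin k → ℝ) :
    ∑ s, g s = (∑ s ∈ Finset.univ.filter (fun s : Fin k => s.val < r), g s) + g ⟨r, hrk⟩
      + ∑ s ∈ Finset.univ.filter (fun s : Fin k => r < s.val), g s := by
  have h2 : Finset.univ.filter (fun s : Fin k => ¬ s.val < r)
      = insert (⟨r, hrk⟩ : Fin k) (Finset.univ.filter (fun s : Fin k => r < s.val)) := by
    ext s
    simp only [Finset.mem_filter, Finset.mem_univ, true_and, Finset.mem_insert, Fin.ext_iff]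
    omega
  rw [← Finset.sum_filter_add_sum_filter_not Finset.univ (fun s : Fin k => s.val < r) g, h2,
    Finset.sum_insert (by simp)]
  ring

/-- for the two-point distribution `p = (λ, 1-λ)` and scores sorted so that
`Δ_s = f(1,s) - f(2,s)` is non-increasing, with `r = ⌊λk⌋` (so `r < k`), the maximum of
`Σ P(x,s) f(x,s)` over all couplings of `(p, Uniform{1,…,k})` equals
`(1/k) Σ_s f(2,s) + (λ - r/k) Δ_{r+1} + (1/k) Σ_{s=1}^r Δ_s`, attained by the explicit
coupling that fills the first `r` columns with token 1, splits column `r+1`, and fills the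
remaining columns with token 2. (Indices: `s : Fin k` encodes `s+1 ∈ {1,…,k}`.) -/
theorem two_point_optimal_coupling (lam : ℝ) (hlam : lam ∈ Set.Ico (1 / 2 : ℝ) 1)
    (k : ℕ) (hk : 1 ≤ k) (r : ℕ) (hr : r = ⌊lam * k⌋₊) (hrk : r < k)
    (f : Fin 2 → Fin k → ℝ)
    (hsorted : Antitone fun s : Fin k => f 0 s - f 1 s)
    (p : Fin 2 → ℝ) (hp : p = ![lam, 1 - lam])
    (Pstar : Fin 2 → Fin k → ℝ)
    (hPstar : ∀ s : Fin k,
      (Pstar 0 s = if s.val < r then 1 / (k : ℝ)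
        else if s.val = r then lam - r / (k : ℝ) else 0)
      ∧ (Pstar 1 s = if s.val < r then 0
        else if s.val = r then ((r : ℝ) + 1) / k - lam else 1 / (k : ℝ))) :
    IsCoupling p Pstar
    ∧ (∑ x, ∑ s, Pstar x s * f x s)
        = (1 / (k : ℝ)) * ∑ s, f 1 s
          + (lam - r / (k : ℝ)) * (f 0 ⟨r, hrk⟩ - f 1 ⟨r, hrk⟩)
          + (1 / (k : ℝ)) * ∑ s ∈ Finset.univ.filter (fun s : Fin k => s.val < r),
              (f 0 s - f 1 s)
    ∧ ∀ P : Fin 2 → Fin k → ℝ, IsCoupling p P →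
        (∑ x, ∑ s, P x s * f x s)
          ≤ (1 / (k : ℝ)) * ∑ s, f 1 s
            + (lam - r / (k : ℝ)) * (f 0 ⟨r, hrk⟩ - f 1 ⟨r, hrk⟩)
            + (1 / (k : ℝ)) * ∑ s ∈ Finset.univ.filter (fun s : Fin k => s.val < r),
                (f 0 s - f 1 s) := by
  obtain ⟨hlam1, hlam2⟩ := hlam
  have hk0 : (0 : ℝ) < k := by
    have : (0 : ℕ) < k := hk
    exact_mod_cast this
  have hlam0 : (0 : ℝ) ≤ lam := by linarith
  have h1 : (r : ℝ) ≤ lam * k := by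
    rw [hr]; exact Nat.floor_le (by positivity)
  have h2 : lam * k < (r : ℝ) + 1 := by
    rw [hr]; exact_mod_cast Nat.lt_floor_add_one (lam * k)
  have ha : 0 ≤ lam - r / (k : ℝ) := by
    rw [sub_nonneg, div_le_iff₀ hk0]; exact h1
  have hb : 0 ≤ ((r : ℝ) + 1) / k - lam := by
    rw [sub_nonneg, le_div_iff₀ hk0]; exact h2.le
  have hcard_lt := card_filter_lt' r hrk
  have hcard_gt := card_filter_gt' r hrk
  -- column sums
  have hcol : ∀ s : Fin k, Pstar 0 s + Pstar 1 s = 1 / (k : ℝ) := by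
    intro s
    rw [(hPstar s).1, (hPstar s).2]
    split_ifs <;> ring
  -- row sums of Pstar
  have hP0sum : ∑ s, Pstar 0 s = lam := by
    rw [sum_split'_s15 r hrk]
    have e1 : ∑ s ∈ Finset.univ.filter (fun s : Fin k => s.val < r), Pstar 0 s
        = (r : ℝ) / k := by
      rw [Finset.sum_congr rfl
        (fun s hs => by rw [(hPstar s).1, if_pos (Finset.mem_filter.mp hs).2]),
        Finset.sum_const, hcard_lt, nsmul_eq_mul]
      ring
    have e2 : Pstar 0 ⟨r, hrk⟩ = lam - r / (k : ℝ) := by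
      rw [(hPstar _).1]; simp
    have e3 : ∑ s ∈ Finset.univ.filter (fun s : Fin k => r < s.val), Pstar 0 s = 0 := by
      refine Finset.sum_eq_zero fun s hs => ?_
      have hgt := (Finset.mem_filter.mp hs).2
      rw [(hPstar s).1, if_neg (by omega), if_neg (by omega)]
    rw [e1, e2, e3]; ring
  have hP1sum : ∑ s, Pstar 1 s = 1 - lam := by
    rw [sum_split'_s15 r hrk]
    have e1 : ∑ s ∈ Finset.univ.filter (fun s : Fin k => s.val < r), Pstar 1 s = 0 := by
      refine Finset.sum_eq_zero fun s hs => ?_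
      rw [(hPstar s).2, if_pos (Finset.mem_filter.mp hs).2]
    have e2 : Pstar 1 ⟨r, hrk⟩ = ((r : ℝ) + 1) / k - lam := by
      rw [(hPstar _).2]; simp
    have e3 : ∑ s ∈ Finset.univ.filter (fun s : Fin k => r < s.val), Pstar 1 s
        = ((k : ℝ) - (r + 1)) / k := by
      rw [Finset.sum_congr rfl (fun s hs => by
          have hgt := (Finset.mem_filter.mp hs).2
          rw [(hPstar s).2, if_neg (by omega), if_neg (by omega)]),
        Finset.sum_const, hcard_gt, nsmul_eq_mul]
      have : ((k - (r + 1) : ℕ) : ℝ) = (k : ℝ) - (r + 1) := by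
        have : r + 1 ≤ k := hrk
        push_cast [this]; ring
      rw [this]; ring
    rw [e1, e2, e3]
    field_simp
    ring
  have hCoupling : IsCoupling p Pstar := by
    refine ⟨?_, ?_, ?_⟩
    · intro x s
      match x with
      | 0 =>
        rw [(hPstar s).1]
        split_ifs
        · positivity
        · exact ha
        · exact le_refl 0
      | 1 =>
        rw [(hPstar s).2]
        split_ifs
        · exact le_refl 0
        · exact hb
        · positivity
    · intro x
      match x with
      | 0 => simpa [hp] using hP0sum
      | 1 => simpa [hp] using hP1sum
    · intro s
      rw [Fin.sum_univ_two]
      exact hcol s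
  -- decomposition of the objective
  have key : ∀ P : Fin 2 → Fin k → ℝ, (∀ s, P 0 s + P 1 s = 1 / (k : ℝ)) →
      ∑ x, ∑ s, P x s * f x s
        = (1 / (k : ℝ)) * ∑ s, f 1 s + ∑ s, P 0 s * (f 0 s - f 1 s) := by
    intro P hc
    rw [Fin.sum_univ_two]
    have e : ∀ s : Fin k, P 0 s * f 0 s + P 1 s * f 1 s
        = (1 / (k : ℝ)) * f 1 s + P 0 s * (f 0 s - f 1 s) := by
      intro s
      have := hc s
      linear_combination (f 1 s) * this
    calc ∑ s, P 0 s * f 0 s + ∑ s, P 1 s * f 1 s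
        = ∑ s, (P 0 s * f 0 s + P 1 s * f 1 s) := (Finset.sum_add_distrib).symm
      _ = ∑ s, ((1 / (k : ℝ)) * f 1 s + P 0 s * (f 0 s - f 1 s)) :=
          Finset.sum_congr rfl fun s _ => e s
      _ = (1 / (k : ℝ)) * ∑ s, f 1 s + ∑ s, P 0 s * (f 0 s - f 1 s) := by
          rw [Finset.sum_add_distrib, Finset.mul_sum]
  have hPstarΔ : ∑ s, Pstar 0 s * (f 0 s - f 1 s)
      = (lam - r / (k : ℝ)) * (f 0 ⟨r, hrk⟩ - f 1 ⟨r, hrk⟩)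
        + (1 / (k : ℝ)) * ∑ s ∈ Finset.univ.filter (fun s : Fin k => s.val < r),
            (f 0 s - f 1 s) := by
    rw [sum_split'_s15 r hrk]
    have e1 : ∑ s ∈ Finset.univ.filter (fun s : Fin k => s.val < r),
        Pstar 0 s * (f 0 s - f 1 s)
        = (1 / (k : ℝ)) * ∑ s ∈ Finset.univ.filter (fun s : Fin k => s.val < r),
            (f 0 s - f 1 s) := by
      rw [Finset.mul_sum]
      refine Finset.sum_congr rfl fun s hs => ?_
      rw [(hPstar s).1, if_pos (Finset.mem_filter.mp hs).2]
    have e2 : Pstar 0 ⟨r, hrk⟩ = lam - r / (k : ℝ) := by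
      rw [(hPstar _).1]; simp
    have e3 : ∑ s ∈ Finset.univ.filter (fun s : Fin k => r < s.val),
        Pstar 0 s * (f 0 s - f 1 s) = 0 := by
      refine Finset.sum_eq_zero fun s hs => ?_
      have hgt := (Finset.mem_filter.mp hs).2
      rw [(hPstar s).1, if_neg (by omega), if_neg (by omega), zero_mul]
    rw [e1, e2, e3]; ring
  refine ⟨hCoupling, ?_, ?_⟩
  · rw [key Pstar hcol, hPstarΔ]; ring
  · intro P hC
    obtain ⟨hPnn, hProw, hPcol⟩ := hC
    have hcolP : ∀ s : Fin k, P 0 s + P 1 s = 1 / (k : ℝ) := by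
      intro s
      have := hPcol s
      rwa [Fin.sum_univ_two] at this
    have hq1 : ∀ s : Fin k, P 0 s ≤ 1 / (k : ℝ) := by
      intro s
      have := hcolP s
      have := hPnn 1 s
      linarith
    have hqsum : ∑ s, P 0 s = lam := by
      have := hProw 0
      simpa [hp] using this
    have hterm : ∀ s : Fin k,
        (Pstar 0 s - P 0 s) * (f 0 ⟨r, hrk⟩ - f 1 ⟨r, hrk⟩)
          ≤ (Pstar 0 s - P 0 s) * (f 0 s - f 1 s) := by
      intro s
      rcases lt_trichotomy s.val r with h | h | h
      · have hle : s ≤ (⟨r, hrk⟩ : Fin k) := by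
          simp only [Fin.le_def, Fin.val_mk]; omega
        have hΔ : f 0 ⟨r, hrk⟩ - f 1 ⟨r, hrk⟩ ≤ f 0 s - f 1 s := hsorted hle
        have hpos : 0 ≤ Pstar 0 s - P 0 s := by
          rw [(hPstar s).1, if_pos h]
          have := hq1 s; linarith
        exact mul_le_mul_of_nonneg_left hΔ hpos
      · have hs : s = (⟨r, hrk⟩ : Fin k) := Fin.ext h
        rw [hs]
      · have hle : (⟨r, hrk⟩ : Fin k) ≤ s := by
          simp only [Fin.le_def, Fin.val_mk]; omega
        have hΔ : f 0 s - f 1 s ≤ f 0 ⟨r, hrk⟩ - f 1 ⟨r, hrk⟩ := hsorted hle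
        have hneg : Pstar 0 s - P 0 s ≤ 0 := by
          rw [(hPstar s).1, if_neg (by omega), if_neg (by omega)]
          have := hPnn 0 s; linarith
        exact mul_le_mul_of_nonpos_left hΔ hneg
    have hsum := Finset.sum_le_sum (fun s (_ : s ∈ Finset.univ) => hterm s)
    have l1 : ∑ s, (Pstar 0 s - P 0 s) * (f 0 ⟨r, hrk⟩ - f 1 ⟨r, hrk⟩) = 0 := by
      rw [← Finset.sum_mul, Finset.sum_sub_distrib, hP0sum, hqsum]; ring
    have l2 : ∑ s, (Pstar 0 s - P 0 s) * (f 0 s - f 1 s)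
        = ∑ s, Pstar 0 s * (f 0 s - f 1 s) - ∑ s, P 0 s * (f 0 s - f 1 s) := by
      rw [← Finset.sum_sub_distrib]
      exact Finset.sum_congr rfl fun s _ => by ring
    rw [key P hcolP]
    rw [l1, l2] at hsum
    linarith [hPstarΔ]
end
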